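/- Let U be an M × n matrix and let V be a d × n matrix all of whose entries satisfy |v_{i,j}| ≤ 1. Then the operator norm of the row product satisfies ‖U ⊗_r V‖ ≤ √d · ‖U‖, where ‖·‖ denotes the ℓ₂ → ℓ₂ operator norm. -/

import Mathlib

open MeasureTheory ProbabilityTheory Real
open scoped BigOperators ENNReal

noncomputable section

/-- The `K`-fold row product of `d × n` matrices: a `d^K × n` matrix (rows indexed by
`Fin K → Fin d`) whose rows are the entry-wise products of rows of the factors. -/
def rowProd {K d n : ℕ} (Δ : Fin K → Matrix (Fin d) (Fin n) ℝ) :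
    Matrix (Fin K → Fin d) (Fin n) ℝ :=
  fun i j => ∏ k, Δ k (i k) j

/-- The row product of two matrices with the same number of columns. -/
def rowProd2 {N M n : Type*} (A : Matrix N n ℝ) (B : Matrix M n ℝ) :
    Matrix (N × M) n ℝ :=
  fun p j => A p.1 j * B p.2 j

/-- `U ⊗_r xᵀ` : multiply each row of `U` coordinatewise by the vector `x`. -/
def rowProdVec {N n : Type*} (U : Matrix N n ℝ) (x : n → ℝ) : Matrix N n ℝ :=
  fun i j => U i j * x j

/-- Euclidean (ℓ₂) norm of a vector. -/
def l2norm {n : Type*} [Fintype n] (x : n → ℝ) : ℝ :=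
  Real.sqrt (∑ i, x i ^ 2)

/-- ℓ₁ norm of a vector. -/
def l1norm {n : Type*} [Fintype n] (x : n → ℝ) : ℝ :=
  ∑ i, |x i|

/-- ℓ∞ norm of a vector. -/
def linftyNorm {n : Type*} [Fintype n] (x : n → ℝ) : ℝ :=
  ⨆ i, |x i|

/-- The ℓ₂ → ℓ₂ operator norm of a matrix. -/
def opNorm {m n : Type*} [Fintype m] [Fintype n] [DecidableEq n] (A : Matrix m n ℝ) : ℝ :=
  ‖LinearMap.toContinuousLinearMap (Matrix.toEuclideanLin A)‖

/-- A `δ` random variable: bounded by 1 a.s., centered, with variance at least `δ²`. -/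
def IsDeltaRV {Ω : Type*} [MeasurableSpace Ω] (μ : Measure Ω) (δ : ℝ) (ξ : Ω → ℝ) : Prop :=
  Measurable ξ ∧ (∀ᵐ ω ∂μ, |ξ ω| ≤ 1) ∧ (∫ ω, ξ ω ∂μ = 0) ∧ δ ^ 2 ≤ ∫ ω, (ξ ω) ^ 2 ∂μ

/-! Row `(i, k)` of `U ⊗_r V` applied to `x` is row `i` of `U` applied to the entrywise product
`V k * x`, and `‖V k * x‖ ≤ ‖x‖` because the entries of `V` are bounded by one. Summing the
`d` resulting bounds `‖U (V k * x)‖² ≤ ‖U‖² ‖x‖²` gives `‖(U ⊗_r V) x‖² ≤ d ‖U‖² ‖x‖²`. -/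

open Matrix

section OpNorm

variable {m n : Type*} [Fintype m] [Fintype n] [DecidableEq n]

lemma norm_toEuclideanLin_apply_sq (A : Matrix m n ℝ) (x : EuclideanSpace ℝ n) :
    ‖LinearMap.toContinuousLinearMap (toEuclideanLin A) x‖ ^ 2 = ∑ i, (A *ᵥ x.ofLp) i ^ 2 := by
  rw [EuclideanSpace.norm_sq_eq]
  simp only [Real.norm_eq_abs, sq_abs]
  rfl

lemma sum_mulVec_sq_le_opNorm_sq_mul (A : Matrix m n ℝ) (x : n → ℝ) :
    ∑ i, (A *ᵥ x) i ^ 2 ≤ opNorm A ^ 2 * ∑ j, x j ^ 2 := by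
  have hx : ‖WithLp.toLp 2 x‖ ^ 2 = ∑ j, x j ^ 2 := by
    simp [EuclideanSpace.norm_sq_eq]
  rw [← hx, ← mul_pow, ← norm_toEuclideanLin_apply_sq]
  exact pow_le_pow_left₀ (norm_nonneg _) (ContinuousLinearMap.le_opNorm _ _) 2

lemma opNorm_le_of_sum_mulVec_sq_le (A : Matrix m n ℝ) {C : ℝ} (hC : 0 ≤ C)
    (h : ∀ x : n → ℝ, ∑ i, (A *ᵥ x) i ^ 2 ≤ C ^ 2 * ∑ j, x j ^ 2) : opNorm A ≤ C := by
  refine ContinuousLinearMap.opNorm_le_bound _ hC fun x => ?_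
  refine pow_le_pow_iff_left₀ (norm_nonneg _) (by positivity) two_ne_zero |>.mp ?_
  rw [norm_toEuclideanLin_apply_sq, mul_pow, EuclideanSpace.norm_sq_eq]
  simpa only [Real.norm_eq_abs, sq_abs] using h x.ofLp

end OpNorm

lemma sum_mul_sq_le_of_abs_le_one {n : Type*} [Fintype n] {v : n → ℝ} (hv : ∀ j, |v j| ≤ 1)
    (x : n → ℝ) : ∑ j, (v j * x j) ^ 2 ≤ ∑ j, x j ^ 2 := by
  refine Finset.sum_le_sum fun j _ => ?_
  rw [mul_pow]
  have : v j ^ 2 ≤ 1 := by rw [← sq_abs]; exact pow_le_one₀ (abs_nonneg _) (hv j)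
  nlinarith [sq_nonneg (x j)]

lemma rowProd2_mulVec {N m n : Type*} [Fintype n] (U : Matrix N n ℝ) (V : Matrix m n ℝ)
    (x : n → ℝ) (i : N) (k : m) : (rowProd2 U V *ᵥ x) (i, k) = (U *ᵥ (V k * x)) i := by
  simp only [mulVec, dotProduct, rowProd2, Pi.mul_apply, mul_assoc]

theorem opNorm_rowProd2_le {N m n : Type*} [Fintype N] [Fintype m] [Fintype n] [DecidableEq n]
    (U : Matrix N n ℝ) (V : Matrix m n ℝ) (hV : ∀ k j, |V k j| ≤ 1) :
    opNorm (rowProd2 U V) ≤ √(Fintype.card m) * opNorm U := by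
  have hU : 0 ≤ opNorm U := norm_nonneg _
  refine opNorm_le_of_sum_mulVec_sq_le _ (by positivity) fun x => ?_
  calc ∑ p : N × m, (rowProd2 U V *ᵥ x) p ^ 2
      = ∑ k, ∑ i, (U *ᵥ (V k * x)) i ^ 2 := by
        rw [Fintype.sum_prod_type, Finset.sum_comm]
        simp only [rowProd2_mulVec]
    _ ≤ ∑ _k : m, opNorm U ^ 2 * ∑ j, x j ^ 2 := by
        refine Finset.sum_le_sum fun k _ => (sum_mulVec_sq_le_opNorm_sq_mul U _).trans ?_
        exact mul_le_mul_of_nonneg_left (sum_mul_sq_le_of_abs_le_one (hV k) x) (sq_nonneg _)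
    _ = (√(Fintype.card m) * opNorm U) ^ 2 * ∑ j, x j ^ 2 := by
        rw [Finset.sum_const, Finset.card_univ, nsmul_eq_mul, mul_pow,
          Real.sq_sqrt (Nat.cast_nonneg _), mul_assoc]

theorem stmt8 (M n d : ℕ) (U : Matrix (Fin M) (Fin n) ℝ) (V : Matrix (Fin d) (Fin n) ℝ)
    (hV : ∀ i j, |V i j| ≤ 1) :
    opNorm (rowProd2 U V) ≤ Real.sqrt d * opNorm U := by
  simpa using opNorm_rowProd2_le U V hV
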